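/- arXiv:2012.04428 — 6 statements merged into one kernel-verified Lean document; each statement's English description precedes it below -/
import Mathlib

section
/- Let f be a ReLU MLP with widths n_0, …, n_L and let 𝕊 be its (finite) set of achievable joint activation patterns. Then the space dimension histogram is dominated by the dimension histogram: for every J ∈ ℕ, the number of s ∈ 𝕊 with Sd(h_{L−1}(D(s))) ≥ J is at most the number of s ∈ 𝕊 with min{n_0, |s_1|₁, …, |s_{L−1}|₁} ≥ J, where s = (s_1, …, s_{L−1}). -/
open scoped Classical

noncomputable section

/-- The space dimension of a set `D ⊆ ℝᵈ`: the dimension of the direction of its affine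
span, i.e. the dimension of `vectorSpan ℝ D`. -/
def spaceDim {d : ℕ} (D : Set (Fin d → ℝ)) : ℕ :=
  Module.finrank ℝ ↥(vectorSpan ℝ D)

/-- `|s|₁`, the number of ones in a `Bool`-valued pattern. -/
def bweight {m : ℕ} (s : Fin m → Bool) : ℕ :=
  (Finset.univ.filter (fun j => s j = true)).card

/-- Hidden-layer maps of a ReLU MLP: `mlpLayer n W b i = h_i`. -/
def mlpLayer (n : ℕ → ℕ) (W : ∀ i : ℕ, Matrix (Fin (n (i + 1))) (Fin (n i)) ℝ)
    (b : ∀ i : ℕ, Fin (n (i + 1)) → ℝ) : (i : ℕ) → (Fin (n 0) → ℝ) → Fin (n i) → ℝ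
  | 0 => fun x => x
  | i + 1 => fun x j => max ((W i).mulVec (mlpLayer n W b i x) j + b i j) 0

/-- Activation pattern of layer `i + 1` of a ReLU MLP: `mlpPattern n W b i x = s_{i+1}(x)`. -/
def mlpPattern (n : ℕ → ℕ) (W : ∀ i : ℕ, Matrix (Fin (n (i + 1))) (Fin (n i)) ℝ)
    (b : ∀ i : ℕ, Fin (n (i + 1)) → ℝ) (i : ℕ) (x : Fin (n 0) → ℝ) :
    Fin (n (i + 1)) → Bool :=
  fun j => decide (0 < (W i).mulVec (mlpLayer n W b i x) j + b i j)

open Module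

section Aux

variable {E F : Type*} [AddCommGroup E] [Module ℝ E] [AddCommGroup F] [Module ℝ F]

lemma vectorSpan_affine_image_le (f : E →ᵃ[ℝ] F) (D : Set E) :
    vectorSpan ℝ (f '' D) ≤ (vectorSpan ℝ D).map f.linear := by
  rw [vectorSpan_def]
  refine Submodule.span_le.2 ?_
  rintro v ⟨a, ⟨x, hx, rfl⟩, b, ⟨y, hy, rfl⟩, rfl⟩
  exact ⟨x -ᵥ y, vsub_mem_vectorSpan ℝ hx hy, f.linearMap_vsub x y⟩

lemma finrank_vectorSpan_affine_image_le [FiniteDimensional ℝ E]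
    (f : E →ᵃ[ℝ] F) (D : Set E) :
    finrank ℝ (vectorSpan ℝ (f '' D)) ≤ finrank ℝ (vectorSpan ℝ D) := by
  haveI : Module.Finite ℝ ((vectorSpan ℝ D).map f.linear) :=
    Module.Finite.map _ _
  exact le_trans (Submodule.finrank_mono (vectorSpan_affine_image_le f D))
    (Submodule.finrank_map_le f.linear (vectorSpan ℝ D))

lemma vectorSpan_le_of_subset (p : Submodule ℝ E) (D : Set E) (h : D ⊆ p) :
    vectorSpan ℝ D ≤ p := by
  rw [vectorSpan_def]
  refine Submodule.span_le.2 ?_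
  rintro v ⟨a, ha, b, hb, rfl⟩
  exact p.sub_mem (h ha) (h hb)

end Aux

/-- The coordinate subspace of vectors supported on the ones of a pattern. -/
def coordSubspace {m : ℕ} (s : Fin m → Bool) : Submodule ℝ (Fin m → ℝ) where
  carrier := {v | ∀ j, s j = false → v j = 0}
  add_mem' := fun hv hw j hj => by simp [hv j hj, hw j hj]
  zero_mem' := fun j _ => rfl
  smul_mem' := fun c v hv j hj => by simp [hv j hj]

def coordEquiv {m : ℕ} (s : Fin m → Bool) :
    coordSubspace s ≃ₗ[ℝ] ({j : Fin m // s j = true} → ℝ) where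
  toFun v := fun j => v.1 j.1
  invFun u := ⟨fun j => if h : s j = true then u ⟨j, h⟩ else 0, by
    intro j hj
    simp [hj]⟩
  map_add' v w := rfl
  map_smul' c v := rfl
  left_inv v := by
    ext j
    by_cases h : s j = true
    · simp [h]
    · simp only [h, dif_neg, not_false_iff]
      exact (v.2 j (by simpa using h)).symm
  right_inv u := by
    funext j
    simp [j.2]

lemma finrank_coordSubspace {m : ℕ} (s : Fin m → Bool) :
    finrank ℝ (coordSubspace s) = bweight s := by
  rw [(coordEquiv s).finrank_eq, finrank_pi, Fintype.card_subtype, bweight]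

/-- The masked linear map of a layer with fixed activation pattern. -/
def maskLin {p q : ℕ} (M : Matrix (Fin q) (Fin p) ℝ) (t : Fin q → Bool) :
    (Fin p → ℝ) →ₗ[ℝ] (Fin q → ℝ) where
  toFun v := fun j => if t j then M.mulVec v j else 0
  map_add' v w := by
    funext j
    by_cases h : t j <;> simp [h, Matrix.mulVec_add]
  map_smul' c v := by
    funext j
    by_cases h : t j <;> simp [h, Matrix.mulVec_smul]

/-- The affine map computed by a ReLU layer on inputs with fixed activation pattern. -/
def layerAff {p q : ℕ} (M : Matrix (Fin q) (Fin p) ℝ) (c : Fin q → ℝ) (t : Fin q → Bool) :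
    (Fin p → ℝ) →ᵃ[ℝ] (Fin q → ℝ) :=
  (maskLin M t).toAffineMap + AffineMap.const ℝ _ (fun j => if t j then c j else 0)

lemma layerAff_apply {p q : ℕ} (M : Matrix (Fin q) (Fin p) ℝ) (c : Fin q → ℝ)
    (t : Fin q → Bool) (v : Fin p → ℝ) (j : Fin q) :
    layerAff M c t v j = if t j then M.mulVec v j + c j else 0 := by
  by_cases h : t j <;> simp [layerAff, maskLin, h]

lemma mlpLayer_succ_of_pattern (n : ℕ → ℕ)
    (W : ∀ i : ℕ, Matrix (Fin (n (i + 1))) (Fin (n i)) ℝ)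
    (b : ∀ i : ℕ, Fin (n (i + 1)) → ℝ) (i : ℕ) (t : Fin (n (i + 1)) → Bool)
    (x : Fin (n 0) → ℝ) (hx : mlpPattern n W b i x = t) :
    mlpLayer n W b (i + 1) x = layerAff (W i) (b i) t (mlpLayer n W b i x) := by
  funext j
  have hpat : t j = decide (0 < (W i).mulVec (mlpLayer n W b i x) j + b i j) :=
    (congrFun hx j).symm
  rw [layerAff_apply]
  by_cases h : 0 < (W i).mulVec (mlpLayer n W b i x) j + b i j
  · simp only [hpat, h, decide_eq_true h, if_true, mlpLayer]
    exact max_eq_left h.le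
  · simp only [hpat, decide_eq_false h, if_false, mlpLayer]
    exact max_eq_right (not_lt.1 h)

lemma exists_affine_factor (L : ℕ) (n : ℕ → ℕ)
    (W : ∀ i : ℕ, Matrix (Fin (n (i + 1))) (Fin (n i)) ℝ)
    (b : ∀ i : ℕ, Fin (n (i + 1)) → ℝ)
    (s : ∀ i : Fin (L - 1), Fin (n (↑i + 1)) → Bool)
    (k m : ℕ) (hk : k ≤ m) (hm : m ≤ L - 1) :
    ∃ F : (Fin (n k) → ℝ) →ᵃ[ℝ] (Fin (n m) → ℝ),
      ∀ x : Fin (n 0) → ℝ, (∀ i : Fin (L - 1), mlpPattern n W b ↑i x = s i) →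
        mlpLayer n W b m x = F (mlpLayer n W b k x) := by
  induction m, hk using Nat.le_induction with
  | base => exact ⟨AffineMap.id ℝ _, fun x _ => rfl⟩
  | succ m hkm ih =>
    obtain ⟨F, hF⟩ := ih (le_trans (Nat.le_succ m) hm)
    have hmlt : m < L - 1 := hm
    refine ⟨(layerAff (W m) (b m) (s ⟨m, hmlt⟩)).comp F, fun x hx => ?_⟩
    rw [mlpLayer_succ_of_pattern n W b m (s ⟨m, hmlt⟩) x (hx ⟨m, hmlt⟩), hF x hx]
    rfl

/-- for a ReLU MLP, the space dimension histogram of the regions is dominated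
by the dimension histogram: for every `J`, the number of achievable joint activation
patterns `s` with `Sd(h_{L-1}(D(s))) ≥ J` is at most the number of achievable joint
patterns with `min{n_0, |s_1|₁, …, |s_{L-1}|₁} ≥ J`. -/
theorem statement1 (L : ℕ) (hL : 2 ≤ L) (n : ℕ → ℕ)
    (W : ∀ i : ℕ, Matrix (Fin (n (i + 1))) (Fin (n i)) ℝ)
    (b : ∀ i : ℕ, Fin (n (i + 1)) → ℝ) (J : ℕ) :
    {s : ∀ i : Fin (L - 1), Fin (n (↑i + 1)) → Bool |
        (∃ x : Fin (n 0) → ℝ, (fun i : Fin (L - 1) => mlpPattern n W b ↑i x) = s) ∧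
        J ≤ spaceDim (mlpLayer n W b (L - 1) ''
              {x : Fin (n 0) → ℝ |
                (fun i : Fin (L - 1) => mlpPattern n W b ↑i x) = s})}.ncard ≤
    {s : ∀ i : Fin (L - 1), Fin (n (↑i + 1)) → Bool |
        (∃ x : Fin (n 0) → ℝ, (fun i : Fin (L - 1) => mlpPattern n W b ↑i x) = s) ∧
        (J ≤ n 0 ∧ ∀ i : Fin (L - 1), J ≤ bweight (s i))}.ncard := by
  apply Set.ncard_le_ncard ?_ (Set.toFinite _)
  rintro s ⟨⟨x0, hx0⟩, hdim⟩
  set D : Set (Fin (n 0) → ℝ) :=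
    {x : Fin (n 0) → ℝ | (fun i : Fin (L - 1) => mlpPattern n W b ↑i x) = s} with hD
  have hmem : ∀ x ∈ D, ∀ i : Fin (L - 1), mlpPattern n W b ↑i x = s i :=
    fun x hx i => congrFun hx i
  refine ⟨⟨x0, hx0⟩, ?_, ?_⟩
  · -- J ≤ n 0
    obtain ⟨F, hF⟩ := exists_affine_factor L n W b s 0 (L - 1) (Nat.zero_le _) le_rfl
    have himg : mlpLayer n W b (L - 1) '' D = F '' D :=
      Set.image_congr (fun x hx => hF x (hmem x hx))
    calc J ≤ spaceDim (mlpLayer n W b (L - 1) '' D) := hdim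
      _ = finrank ℝ (vectorSpan ℝ (F '' D)) := by rw [spaceDim, himg]
      _ ≤ finrank ℝ (vectorSpan ℝ D) := finrank_vectorSpan_affine_image_le F D
      _ ≤ finrank ℝ (Fin (n 0) → ℝ) := Submodule.finrank_le _
      _ = n 0 := finrank_fin_fun ℝ
  · -- ∀ i, J ≤ bweight (s i)
    intro i
    obtain ⟨F, hF⟩ := exists_affine_factor L n W b s (↑i + 1) (L - 1) i.2 le_rfl
    have himg : mlpLayer n W b (L - 1) '' D = F '' (mlpLayer n W b (↑i + 1) '' D) := by
      rw [Set.image_image]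
      exact Set.image_congr (fun x hx => hF x (hmem x hx))
    have hsub : mlpLayer n W b (↑i + 1) '' D ⊆ (coordSubspace (s i) : Set _) := by
      rintro _ ⟨x, hx, rfl⟩ j hj
      have hp : mlpPattern n W b ↑i x j = s i j := congrFun (hmem x hx i) j
      rw [hj] at hp
      have hnp : ¬ 0 < (W ↑i).mulVec (mlpLayer n W b ↑i x) j + b ↑i j :=
        of_decide_eq_false hp
      show max ((W ↑i).mulVec (mlpLayer n W b ↑i x) j + b ↑i j) 0 = 0
      exact max_eq_right (not_lt.1 hnp)
    calc J ≤ spaceDim (mlpLayer n W b (L - 1) '' D) := hdim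
      _ = finrank ℝ (vectorSpan ℝ (F '' (mlpLayer n W b (↑i + 1) '' D))) := by
          rw [spaceDim, himg]
      _ ≤ finrank ℝ (vectorSpan ℝ (mlpLayer n W b (↑i + 1) '' D)) :=
          finrank_vectorSpan_affine_image_le F _
      _ ≤ finrank ℝ (coordSubspace (s i)) :=
          Submodule.finrank_mono (vectorSpan_le_of_subset _ _ hsub)
      _ = bweight (s i) := finrank_coordSubspace (s i)
end
end

section
/- Let n ≥ 1 and let h ∈ RL(1, n) be given by w, b ∈ ℝⁿ, with activation pattern s(x) ∈ {0,1}ⁿ for x ∈ ℝ defined by s(x)_j = 1 iff w_j x + b_j > 0. Then for every t with 0 ≤ t ≤ n, the number of achievable patterns s ∈ {s(x) : x ∈ ℝ} with |s|₁ ≥ t is at most 2(n−t)+1. -/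
open scoped Classical

noncomputable section

namespace St3
variable {n : ℕ} (w b : Fin n → ℝ)

/-- The activation pattern of `x`. -/
def pat (x : ℝ) : Fin n → Bool := fun j => decide (0 < w j * x + b j)

/-- Coordinates with positive weight that are on in `s`. -/
def posOn (s : Fin n → Bool) : Finset (Fin n) :=
  Finset.univ.filter (fun j => 0 < w j ∧ s j = true)

/-- Coordinates with negative weight that are on in `s`. -/
def negOn (s : Fin n → Bool) : Finset (Fin n) :=
  Finset.univ.filter (fun j => w j < 0 ∧ s j = true)

/-- Coordinates with zero weight and positive bias (always on). -/
def zeroP : Finset (Fin n) := Finset.univ.filter (fun j => w j = 0 ∧ 0 < b j)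

/-- The key invariant: strictly monotone along the line, hence injective on patterns. -/
def phi (s : Fin n → Bool) : ℤ :=
  ((Finset.univ.filter (fun j => 0 < w j)).card : ℤ) - (posOn w s).card + (negOn w s).card

lemma posOn_mono {x x' : ℝ} (h : x ≤ x') : posOn w (pat w b x) ⊆ posOn w (pat w b x') := by
  intro j hj
  simp only [posOn, pat, Finset.mem_filter, Finset.mem_univ, true_and, decide_eq_true_eq] at *
  exact ⟨hj.1, lt_of_lt_of_le hj.2 (by nlinarith [hj.1, hj.2])⟩

lemma negOn_anti {x x' : ℝ} (h : x ≤ x') : negOn w (pat w b x') ⊆ negOn w (pat w b x) := by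
  intro j hj
  simp only [negOn, pat, Finset.mem_filter, Finset.mem_univ, true_and, decide_eq_true_eq] at *
  exact ⟨hj.1, lt_of_lt_of_le hj.2 (by nlinarith [hj.1, hj.2])⟩

lemma key {x x' : ℝ} (h : x ≤ x') (hphi : phi w (pat w b x) = phi w (pat w b x')) :
    pat w b x = pat w b x' := by
  have h1 := posOn_mono w b h
  have h2 := negOn_anti w b h
  have c1 := Finset.card_le_card h1
  have c2 := Finset.card_le_card h2
  have e1 : (posOn w (pat w b x)).card = (posOn w (pat w b x')).card := by
    unfold phi at hphi; omega
  have e2 : (negOn w (pat w b x')).card = (negOn w (pat w b x)).card := by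
    unfold phi at hphi; omega
  have s1 : posOn w (pat w b x) = posOn w (pat w b x') :=
    Finset.eq_of_subset_of_card_le h1 (le_of_eq e1.symm)
  have s2 : negOn w (pat w b x') = negOn w (pat w b x) :=
    Finset.eq_of_subset_of_card_le h2 (le_of_eq e2.symm)
  funext j
  rcases lt_trichotomy (w j) 0 with hw | hw | hw
  · have := Finset.ext_iff.mp s2 j
    simp only [negOn, Finset.mem_filter, Finset.mem_univ, true_and, hw] at this
    have : (pat w b x' j = true) ↔ (pat w b x j = true) := by tauto
    cases hx : pat w b x j <;> cases hx' : pat w b x' j <;> simp_all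
  · simp [pat, hw]
  · have := Finset.ext_iff.mp s1 j
    simp only [posOn, Finset.mem_filter, Finset.mem_univ, true_and, hw] at this
    have : (pat w b x j = true) ↔ (pat w b x' j = true) := by tauto
    cases hx : pat w b x j <;> cases hx' : pat w b x' j <;> simp_all

lemma bweight_pat (x : ℝ) :
    bweight (pat w b x) = (posOn w (pat w b x)).card + (negOn w (pat w b x)).card
      + (zeroP w b).card := by
  have hset : Finset.univ.filter (fun j => pat w b x j = true)
      = posOn w (pat w b x) ∪ negOn w (pat w b x) ∪ zeroP w b := by
    ext j
    simp only [posOn, negOn, zeroP, pat, Finset.mem_union, Finset.mem_filter, Finset.mem_univ,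
      true_and, decide_eq_true_eq]
    rcases lt_trichotomy (w j) 0 with hw | hw | hw
    · constructor
      · intro hj; exact Or.inl (Or.inr ⟨hw, by simpa using hj⟩)
      · rintro ((⟨h1, _⟩ | ⟨_, h2⟩) | ⟨h1, _⟩) <;>
          first | exact absurd h1 (by linarith) | simpa using h2
    · simp only [hw, zero_mul, zero_add, lt_irrefl, false_and, or_false, false_or]
      tauto
    · constructor
      · intro hj; exact Or.inl (Or.inl ⟨hw, by simpa using hj⟩)
      · rintro ((⟨_, h2⟩ | ⟨h1, _⟩) | ⟨h1, _⟩) <;>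
          first | exact absurd h1 (by linarith) | simpa using h2
  have d1 : Disjoint (posOn w (pat w b x)) (negOn w (pat w b x)) := by
    simp only [Finset.disjoint_left, posOn, negOn, Finset.mem_filter]
    rintro a ⟨_, h1, _⟩ ⟨_, h2, _⟩; linarith
  have d2 : Disjoint (posOn w (pat w b x) ∪ negOn w (pat w b x)) (zeroP w b) := by
    simp only [Finset.disjoint_left, posOn, negOn, zeroP, Finset.mem_union, Finset.mem_filter]
    rintro a (⟨_, h1, _⟩ | ⟨_, h1, _⟩) ⟨_, h2, _⟩ <;> simp_all
  rw [bweight, hset, Finset.card_union_of_disjoint d2, Finset.card_union_of_disjoint d1]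

lemma sum_le :
    (Finset.univ.filter (fun j => 0 < w j)).card
      + (Finset.univ.filter (fun j => w j < 0)).card + (zeroP w b).card ≤ n := by
  have d1 : Disjoint (Finset.univ.filter (fun j => 0 < w j))
      (Finset.univ.filter (fun j => w j < 0)) := by
    simp only [Finset.disjoint_left, Finset.mem_filter]
    rintro a ⟨_, h1⟩ ⟨_, h2⟩; linarith
  have d2 : Disjoint
      (Finset.univ.filter (fun j => 0 < w j) ∪ Finset.univ.filter (fun j => w j < 0))
      (zeroP w b) := by
    simp only [Finset.disjoint_left, zeroP, Finset.mem_union, Finset.mem_filter]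
    rintro a (⟨_, h1⟩ | ⟨_, h1⟩) ⟨_, h2, _⟩ <;> simp_all
  calc _ = ((Finset.univ.filter (fun j => 0 < w j) ∪ Finset.univ.filter (fun j => w j < 0))
        ∪ zeroP w b).card := by
        rw [Finset.card_union_of_disjoint d2, Finset.card_union_of_disjoint d1]
    _ ≤ (Finset.univ : Finset (Fin n)).card := Finset.card_le_univ _
    _ = n := by simp

end St3

/-- Theorem 2: for a ReLU layer `h ∈ RL(1, n)` and every `0 ≤ t ≤ n`, the
number of achievable activation patterns `s` with `|s|₁ ≥ t` is at most `2(n-t)+1`. -/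
theorem statement3 (n : ℕ) (hn : 1 ≤ n) (w b : Fin n → ℝ) (t : ℕ) (ht : t ≤ n) :
    (Finset.univ.filter (fun s : Fin n → Bool =>
        (∃ x : ℝ, (fun j => decide (0 < w j * x + b j)) = s) ∧ t ≤ bweight s)).card ≤
      2 * (n - t) + 1 := by
  classical
  set P : ℕ := (Finset.univ.filter (fun j => 0 < w j)).card with hP
  set N : ℕ := (Finset.univ.filter (fun j => w j < 0)).card with hN
  set C : ℕ := (St3.zeroP w b).card with hC
  have hsum : P + N + C ≤ n := St3.sum_le w b
  set lo : ℤ := max 0 ((t : ℤ) - C - P) with hlo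
  set hi : ℤ := min ((P : ℤ) + N) ((P : ℤ) + 2 * N + C - t) with hhi
  have hmaps : ∀ s ∈ (Finset.univ.filter (fun s : Fin n → Bool =>
      (∃ x : ℝ, (fun j => decide (0 < w j * x + b j)) = s) ∧ t ≤ bweight s)),
      St3.phi w s ∈ Finset.Icc lo hi := by
    intro s hs
    simp only [Finset.mem_filter, Finset.mem_univ, true_and] at hs
    obtain ⟨⟨x, hx⟩, hts⟩ := hs
    have hxs : St3.pat w b x = s := hx
    subst hxs
    have hu : (St3.posOn w (St3.pat w b x)).card ≤ P := by
      apply Finset.card_le_card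
      intro j hj
      simp only [St3.posOn, Finset.mem_filter] at *
      tauto
    have hv : (St3.negOn w (St3.pat w b x)).card ≤ N := by
      apply Finset.card_le_card
      intro j hj
      simp only [St3.negOn, Finset.mem_filter] at *
      tauto
    have hw := St3.bweight_pat w b x
    rw [Finset.mem_Icc]
    unfold St3.phi
    rw [← hP, ← hC] at *
    omega
  have hinj : Set.InjOn (St3.phi w) ((Finset.univ.filter (fun s : Fin n → Bool =>
      (∃ x : ℝ, (fun j => decide (0 < w j * x + b j)) = s) ∧ t ≤ bweight s)) : Set (Fin n → Bool)) := by
    intro s hs s' hs' hphi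
    simp only [Finset.mem_coe, Finset.mem_filter, Finset.mem_univ, true_and] at hs hs'
    obtain ⟨⟨x, hx⟩, -⟩ := hs
    obtain ⟨⟨x', hx'⟩, -⟩ := hs'
    have hxs : St3.pat w b x = s := hx
    have hxs' : St3.pat w b x' = s' := hx'
    subst hxs; subst hxs'
    rcases le_total x x' with h | h
    · exact St3.key w b h hphi
    · exact (St3.key w b h hphi.symm).symm
  calc _ ≤ (Finset.Icc lo hi).card := Finset.card_le_card_of_injOn _ hmaps hinj
    _ = (hi + 1 - lo).toNat := Int.card_Icc lo hi
    _ ≤ 2 * (n - t) + 1 := by omega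
end
end

section
/- For every n ≥ 1 there exist w, b ∈ ℝⁿ such that the ReLU layer h ∈ RL(1, n) they define (s(x)_j = 1 iff w_j x + b_j > 0, x ∈ ℝ) has activation histogram exactly γ_{1,n}: for every t with 0 ≤ t ≤ n, the number of achievable patterns s with |s|₁ ≥ t equals min(2(n−t)+1, n+1); equivalently, the number of achievable patterns with |s|₁ = i equals 1 for i = n, equals 2 for ⌈n/2⌉ ≤ i ≤ n−1, equals n mod 2 for i = ⌈n/2⌉−1, and equals 0 otherwise. -/
open scoped Classical

noncomputable section

/-- The staircase pattern: first `min r k` up-neurons on, last `n - max r k` down-neurons on. -/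
def patR (n k r : ℕ) : Fin n → Bool :=
  fun j => if (j : ℕ) < k then decide ((j : ℕ) < r) else decide (r ≤ (j : ℕ))

def wdef (n k : ℕ) : Fin n → ℝ := fun j => if (j : ℕ) < k then 1 else -1
def bdef (n k : ℕ) : Fin n → ℝ :=
  fun j => if (j : ℕ) < k then ((k : ℝ) - (j : ℕ)) else (((j : ℕ) : ℝ) - (k : ℝ))

lemma card_fin_filter (n : ℕ) (P : ℕ → Prop) [DecidablePred P] :
    (Finset.univ.filter (fun j : Fin n => P (j : ℕ))).card =
      ((Finset.range n).filter P).card := by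
  refine Finset.card_bij (fun j _ => (j : ℕ)) ?_ ?_ ?_
  · intro a ha
    simp only [Finset.mem_filter, Finset.mem_univ, true_and] at ha
    simp [Finset.mem_filter, Finset.mem_range, a.isLt, ha]
  · intro a _ b _ h
    exact Fin.val_injective h
  · intro b hb
    simp only [Finset.mem_filter, Finset.mem_range] at hb
    exact ⟨⟨b, hb.1⟩, by simp [Finset.mem_filter, hb.2], rfl⟩

lemma patR_weight (n k r : ℕ) (hk : k ≤ n) (hr : r ≤ n) :
    bweight (patR n k r) = min r k + (n - max r k) := by
  unfold bweight
  have h1 : (Finset.univ.filter (fun j : Fin n => patR n k r j = true)) =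
      (Finset.univ.filter (fun j : Fin n => (j : ℕ) < min r k ∨ max r k ≤ (j : ℕ))) := by
    ext j
    simp only [Finset.mem_filter, Finset.mem_univ, true_and, patR]
    by_cases h : (j : ℕ) < k <;> simp [h] <;> omega
  rw [h1, card_fin_filter n (fun m => m < min r k ∨ max r k ≤ m)]
  have h2 : (Finset.range n).filter (fun m => m < min r k ∨ max r k ≤ m) =
      Finset.range n \ Finset.Ico (min r k) (max r k) := by
    ext m
    simp only [Finset.mem_filter, Finset.mem_range, Finset.mem_sdiff, Finset.mem_Ico]
    omega
  rw [h2, Finset.card_sdiff_of_subset]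
  · simp only [Finset.card_range, Nat.card_Ico]
    omega
  · intro m hm
    simp only [Finset.mem_Ico] at hm
    simp only [Finset.mem_range]
    omega

lemma patR_inj (n k : ℕ) {r r' : ℕ} (h : r < r') (hr' : r' ≤ n) :
    patR n k r ≠ patR n k r' := by
  intro he
  have hj : r' - 1 < n := by omega
  have hc := congrFun he ⟨r' - 1, hj⟩
  simp only [patR] at hc
  by_cases hcase : r' - 1 < k <;>
    simp only [hcase, if_pos, if_neg, decide_eq_decide, not_false_eq_true] at hc <;>
    omega

/-- Every real input realizes one of the staircase patterns. -/
lemma pat_mem (n k : ℕ) (hk : k ≤ n) (x : ℝ) :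
    ∃ r ≤ n, (fun j : Fin n => decide (0 < wdef n k j * x + bdef n k j)) = patR n k r := by
  by_cases hx : x < 0
  · -- left half: r = (⌈x⌉ + k).toNat
    have hz : (⌈x⌉ : ℤ) ≤ 0 := Int.ceil_le.mpr (by exact_mod_cast hx.le)
    refine ⟨(⌈x⌉ + k).toNat, by omega, ?_⟩
    funext j
    by_cases hj : (j : ℕ) < k
    · simp only [wdef, bdef, patR, if_pos hj, decide_eq_decide]
      constructor
      · intro h
        have h3 : ((j : ℕ) : ℤ) - (k : ℤ) < ⌈x⌉ := Int.lt_ceil.mpr (by push_cast; linarith)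
        omega
      · intro h
        have h3 : ((j : ℕ) : ℤ) - (k : ℤ) < ⌈x⌉ := by omega
        have h2 := Int.lt_ceil.mp h3
        push_cast at h2
        linarith
    · simp only [wdef, bdef, patR, if_neg hj, decide_eq_decide]
      have hjk : (k : ℝ) ≤ ((j : ℕ) : ℝ) := by exact_mod_cast Nat.le_of_not_lt hj
      constructor
      · intro _; omega
      · intro _; linarith
  · -- right half: r = min (⌊x⌋ + k + 1).toNat n
    push_neg at hx
    have hz : (0 : ℤ) ≤ ⌊x⌋ := Int.floor_nonneg.mpr hx
    refine ⟨min (⌊x⌋ + k + 1).toNat n, min_le_right _ _, ?_⟩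
    funext j
    have hjn := j.isLt
    by_cases hj : (j : ℕ) < k
    · simp only [wdef, bdef, patR, if_pos hj, decide_eq_decide]
      have hjk : ((j : ℕ) : ℝ) < (k : ℝ) := by exact_mod_cast hj
      constructor
      · intro _; omega
      · intro _; linarith
    · simp only [wdef, bdef, patR, if_neg hj, decide_eq_decide]
      constructor
      · intro h
        have h3 : ⌊x⌋ < ((j : ℕ) : ℤ) - (k : ℤ) := Int.floor_lt.mpr (by push_cast; linarith)
        omega
      · intro h
        have h3 : ⌊x⌋ < ((j : ℕ) : ℤ) - (k : ℤ) := by omega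
        have h2 := Int.floor_lt.mp h3
        push_cast at h2
        linarith

/-- Each staircase pattern is realized by a real input. -/
lemma pat_rep (n k r : ℕ) (hr : r ≤ n) :
    (fun j : Fin n => decide (0 < wdef n k j * ((r : ℝ) - (k : ℝ) - 1/2) + bdef n k j)) =
      patR n k r := by
  funext j
  by_cases hj : (j : ℕ) < k
  · simp only [wdef, bdef, patR, if_pos hj, decide_eq_decide]
    constructor
    · intro h
      have h2 : ((j : ℕ) : ℝ) < (r : ℝ) := by linarith
      exact_mod_cast h2
    · intro h
      have h2 : ((j : ℕ) : ℝ) + 1 ≤ (r : ℝ) := by exact_mod_cast h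
      linarith
  · simp only [wdef, bdef, patR, if_neg hj, decide_eq_decide]
    constructor
    · intro h
      have h2 : (r : ℝ) < ((j : ℕ) : ℝ) + 1 := by linarith
      have h3 : r < (j : ℕ) + 1 := by exact_mod_cast h2
      omega
    · intro h
      have h2 : (r : ℝ) ≤ ((j : ℕ) : ℝ) := by exact_mod_cast h
      linarith

/-- for every `n ≥ 1` there is a ReLU layer in `RL(1, n)` whose activation
histogram is exactly `γ_{1,n}`: for every `0 ≤ t ≤ n`, the number of achievable patterns
with `|s|₁ ≥ t` equals `min(2(n-t)+1, n+1)`. -/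
theorem statement4 (n : ℕ) (hn : 1 ≤ n) :
    ∃ w b : Fin n → ℝ, ∀ t : ℕ, t ≤ n →
      (Finset.univ.filter (fun s : Fin n → Bool =>
          (∃ x : ℝ, (fun j => decide (0 < w j * x + b j)) = s) ∧ t ≤ bweight s)).card =
        min (2 * (n - t) + 1) (n + 1) := by
  set k := (n + 1) / 2 with hk
  have hkn : k ≤ n := by omega
  refine ⟨wdef n k, bdef n k, ?_⟩
  intro t ht
  have himg : (Finset.univ.filter (fun s : Fin n → Bool =>
      (∃ x : ℝ, (fun j => decide (0 < wdef n k j * x + bdef n k j)) = s) ∧ t ≤ bweight s))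
      = ((Finset.range (n + 1)).filter
          (fun r => t ≤ min r k + (n - max r k))).image (patR n k) := by
    ext s
    simp only [Finset.mem_filter, Finset.mem_image, Finset.mem_range, Finset.mem_univ, true_and]
    constructor
    · rintro ⟨⟨x, hx⟩, hw⟩
      obtain ⟨r, hr, hpr⟩ := pat_mem n k hkn x
      rw [hpr] at hx
      refine ⟨r, ⟨by omega, ?_⟩, hx⟩
      rw [← hx, patR_weight n k r hkn hr] at hw
      exact hw
    · rintro ⟨r, ⟨hr, hw⟩, hs⟩
      have hr' : r ≤ n := by omega
      refine ⟨⟨(r : ℝ) - (k : ℝ) - 1/2, by rw [pat_rep n k r hr']; exact hs⟩, ?_⟩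
      rw [← hs, patR_weight n k r hkn hr']
      exact hw
  rw [himg, Finset.card_image_of_injOn]
  · have he : (Finset.range (n + 1)).filter (fun r => t ≤ min r k + (n - max r k)) =
        Finset.Icc (k + t - n) (min (k + (n - t)) n) := by
      ext r
      simp only [Finset.mem_filter, Finset.mem_range, Finset.mem_Icc]
      omega
    rw [he, Nat.card_Icc]
    omega
  · intro r hr r' hr' h
    simp only [Finset.coe_filter, Finset.mem_range, Set.mem_setOf_eq] at hr hr'
    rcases lt_trichotomy r r' with hlt | heq | hlt
    · exact absurd h (patR_inj n k hlt (by omega))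
    · exact heq
    · exact absurd h.symm (patR_inj n k hlt (by omega))
end
end

section
/- For every n' ≥ 1 and 0 ≤ n ≤ n', γ^{ours}_{n,n'} ≼ γ^{serra}_{n,n'}; that is, for every J ∈ ℕ, Σ_{j≥J} γ^{ours}_{n,n'}(j) ≤ Σ_{j≥J, n'−n ≤ j ≤ n'} binomial(n', j). -/
open scoped Classical

noncomputable section

/-- Tail sum `Σ_{j ≥ J} v j` of a finitely supported histogram `v : ℕ →₀ ℕ`. -/
def tailSum (v : ℕ →₀ ℕ) (J : ℕ) : ℕ :=
  ∑ j ∈ v.support.filter (fun j => J ≤ j), v j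

/-- Order relation on histograms: `v ≼ w` iff every tail sum of `v` is at most that of `w`. -/
def HistLE (v w : ℕ →₀ ℕ) : Prop :=
  ∀ J : ℕ, tailSum v J ≤ tailSum w J

/-- Downward move: `dm v 0 = 0` and `dm v (i+1) = v i`. -/
def dm (v : ℕ →₀ ℕ) : ℕ →₀ ℕ :=
  Finsupp.embDomain ⟨Nat.succ, Nat.succ_injective⟩ v

/-- Clipping `cl_k`: keeps values below `k`, puts the tail sum at `k`, zero above `k`. -/
def clip (k : ℕ) (v : ℕ →₀ ℕ) : ℕ →₀ ℕ :=
  Finsupp.onFinset (Finset.range (k + 1))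
    (fun i => if i < k then v i else if i = k then tailSum v k else 0)
    (by
      intro a ha
      simp only [Finset.mem_range]
      by_contra hc
      push_neg at hc
      have h1 : ¬ a < k := by omega
      have h2 : a ≠ k := by omega
      simp [h1, h2] at ha)

/-- The histogram `γ_{1,n'}`: value 1 at `n'`, value 2 at `⌈n'/2⌉, …, n'-1`,
value `n' % 2` at `⌈n'/2⌉ - 1`, and 0 elsewhere. -/
def gammaOne (n' : ℕ) : ℕ →₀ ℕ :=
  Finsupp.onFinset (Finset.range (n' + 1))
    (fun i =>
      if i = n' then 1
      else if (n' + 1) / 2 ≤ i ∧ i < n' then 2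
      else if i + 1 = (n' + 1) / 2 then n' % 2
      else 0)
    (by
      intro a ha
      simp only [Finset.mem_range]
      by_contra hc
      push_neg at hc
      have h1 : a ≠ n' := by omega
      have h2 : ¬ ((n' + 1) / 2 ≤ a ∧ a < n') := by omega
      have h3 : a + 1 ≠ (n' + 1) / 2 := by omega
      simp [h1, h2, h3] at ha)

/-- Auxiliary column-major definition of `γ^{ours}`: `gammaOursAux n' n = γ^{ours}_{n,n'}`,
with the convention `γ_{n,n'} = γ_{n',n'}` for `n > n'` built in via the `min`s. -/
def gammaOursAux : ℕ → ℕ → (ℕ →₀ ℕ)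
  | _, 0 => Finsupp.single 0 1
  | n', 1 => gammaOne n'
  | 0, _ + 2 => 0
  | 1, _ + 2 => gammaOne 1
  | n' + 1, nn + 2 =>
      gammaOursAux n' (min (nn + 1) n') + dm (gammaOursAux n' (min (nn + 2) n'))

/-- `γ^{ours}_{n,n'}`. -/
def gammaOurs (n n' : ℕ) : ℕ →₀ ℕ := gammaOursAux n' n

/-- `γ^{serra}_{n,n'}`: `i ↦ binomial(n', i)` for `n' - n ≤ i ≤ n'`, and 0 otherwise. -/
def gammaSerra (n n' : ℕ) : ℕ →₀ ℕ :=
  Finsupp.onFinset (Finset.range (n' + 1))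
    (fun i => if n' - n ≤ i ∧ i ≤ n' then Nat.choose n' i else 0)
    (by
      intro a ha
      simp only [Finset.mem_range]
      by_contra hc
      push_neg at hc
      have h1 : ¬ (n' - n ≤ a ∧ a ≤ n') := by omega
      exact ha (by rw [if_neg h1]))

/-!
Both families obey the same recursion. Pascal's rule, read columnwise, gives
`γ^serra_{n+1,m+1} = γ^serra_{n,m} + dm γ^serra_{min(n+1,m),m}` (the `min` is harmless because
`γ^serra_{n,m} = γ^serra_{m,m}` for `n ≥ m`), which is the recursion defining `γ^ours`. Since `≼`
compares tail sums, and tail sums are additive and merely shifted by `dm`, `≼` is preserved by `+`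
and `dm`; induction on `n'` thus reduces everything to the columns `n = 0` (a unit mass at `0`
against one at `n'`) and `n = 1`, where `γ^ours_{1,n'}` has total mass at most `n' + 1` and a unit
mass at `n'`, while `γ^serra_{1,n'}` puts `n'` at `n' - 1` and `1` at `n'`.
-/

lemma tailSum_eq_sum_of_support_subset {v : ℕ →₀ ℕ} {s : Finset ℕ} (hs : v.support ⊆ s)
    (J : ℕ) : tailSum v J = ∑ j ∈ s.filter (J ≤ ·), v j :=
  Finset.sum_subset (Finset.filter_subset_filter _ hs) fun j hj hjv => by
    simpa [(Finset.mem_filter.mp hj).2] using hjv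

lemma tailSum_eq_sum_Icc {v : ℕ →₀ ℕ} {N : ℕ} (hv : v.support ⊆ Finset.range (N + 1))
    (J : ℕ) : tailSum v J = ∑ j ∈ Finset.Icc J N, v j := by
  rw [tailSum_eq_sum_of_support_subset hv]
  congr 1
  ext j
  simp only [Finset.mem_filter, Finset.mem_range, Finset.mem_Icc]
  omega

lemma tailSum_add (v w : ℕ →₀ ℕ) (J : ℕ) :
    tailSum (v + w) J = tailSum v J + tailSum w J := by
  rw [tailSum_eq_sum_of_support_subset Finsupp.support_add,
    tailSum_eq_sum_of_support_subset Finset.subset_union_left,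
    tailSum_eq_sum_of_support_subset Finset.subset_union_right, ← Finset.sum_add_distrib]
  rfl

lemma tailSum_single (a c J : ℕ) :
    tailSum (Finsupp.single a c) J = if J ≤ a then c else 0 := by
  rw [tailSum_eq_sum_of_support_subset Finsupp.support_single_subset, Finset.sum_filter,
    Finset.sum_singleton, Finsupp.single_eq_same]

lemma dm_apply_zero (v : ℕ →₀ ℕ) : dm v 0 = 0 :=
  Finsupp.embDomain_of_notMem_range _ _ _ (by simp)

lemma dm_apply_succ (v : ℕ →₀ ℕ) (i : ℕ) : dm v (i + 1) = v i :=
  Finsupp.embDomain_apply_self _ v i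

lemma tailSum_dm (v : ℕ →₀ ℕ) (J : ℕ) : tailSum (dm v) J = tailSum v (J - 1) := by
  rw [tailSum, dm, Finsupp.support_embDomain, Finset.filter_map, Finset.sum_map]
  refine Finset.sum_congr (Finset.filter_congr fun j _ => ?_) fun j _ =>
    Finsupp.embDomain_apply_self _ v j
  simp only [Function.comp, Function.Embedding.coeFn_mk]
  omega

lemma HistLE.add {v v' w w' : ℕ →₀ ℕ} (hv : HistLE v v') (hw : HistLE w w') :
    HistLE (v + w) (v' + w') := fun J => by
  rw [tailSum_add, tailSum_add]
  exact Nat.add_le_add (hv J) (hw J)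

lemma HistLE.dm {v w : ℕ →₀ ℕ} (h : HistLE v w) : HistLE (dm v) (dm w) := fun J => by
  rw [tailSum_dm, tailSum_dm]
  exact h (J - 1)

lemma histLE_single_single {a b : ℕ} (hab : a ≤ b) (c : ℕ) :
    HistLE (Finsupp.single a c) (Finsupp.single b c) := fun J => by
  rw [tailSum_single, tailSum_single]
  split_ifs <;> omega

lemma gammaSerra_apply (n n' i : ℕ) :
    gammaSerra n n' i = if n' - n ≤ i ∧ i ≤ n' then n'.choose i else 0 := rfl

lemma gammaSerra_zero (n' : ℕ) : gammaSerra 0 n' = Finsupp.single n' 1 := by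
  ext i
  rw [gammaSerra_apply, Finsupp.single_apply]
  split_ifs <;> first | omega | rfl | simp [show i = n' by omega]

lemma gammaSerra_one {n' : ℕ} (hn' : 1 ≤ n') :
    gammaSerra 1 n' = Finsupp.single (n' - 1) n' + Finsupp.single n' 1 := by
  ext i
  rw [gammaSerra_apply, Finsupp.add_apply, Finsupp.single_apply, Finsupp.single_apply]
  split_ifs <;> first | omega | subst_vars; simp [Nat.choose_symm hn']

lemma gammaSerra_succ_succ (n m : ℕ) :
    gammaSerra (n + 1) (m + 1) = gammaSerra n m + dm (gammaSerra (min (n + 1) m) m) := by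
  ext (_ | i)
  · simp only [Finsupp.add_apply, dm_apply_zero, gammaSerra_apply]
    split_ifs <;> simp_all
  · simp only [Finsupp.add_apply, dm_apply_succ, gammaSerra_apply, Nat.choose_succ_succ']
    split_ifs <;> first | omega | simp_all [Nat.choose_eq_zero_of_lt]

lemma gammaOne_apply (n' i : ℕ) :
    gammaOne n' i = if i = n' then 1
      else if (n' + 1) / 2 ≤ i ∧ i < n' then 2
      else if i + 1 = (n' + 1) / 2 then n' % 2
      else 0 := rfl

lemma gammaOne_support_subset (n' : ℕ) : (gammaOne n').support ⊆ Finset.range (n' + 1) :=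
  Finsupp.support_onFinset_subset

lemma sum_range_gammaOne_le (n' : ℕ) : ∑ j ∈ Finset.range (n' + 1), gammaOne n' j ≤ n' + 1 := by
  set c := (n' + 1) / 2
  calc ∑ j ∈ Finset.range (n' + 1), gammaOne n' j
      ≤ ∑ j ∈ Finset.range (n' + 1), ((if j = n' then 1 else 0)
          + (if j ∈ Finset.Ico c n' then 2 else 0) + (if j = c - 1 then n' % 2 else 0)) :=
        Finset.sum_le_sum fun j _ => by
          simp only [gammaOne_apply, Finset.mem_Ico]
          split_ifs <;> omega
    _ ≤ 1 + 2 * (n' - c) + n' % 2 := by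
        rw [Finset.sum_add_distrib, Finset.sum_add_distrib, Finset.sum_ite_eq',
          Finset.sum_ite_eq', Finset.sum_ite_mem]
        have hIco : Finset.range (n' + 1) ∩ Finset.Ico c n' = Finset.Ico c n' := by
          ext j; simp only [Finset.mem_inter, Finset.mem_range, Finset.mem_Ico]; omega
        simp [hIco, mul_comm, show c ≤ n' + 1 by omega]
    _ ≤ n' + 1 := by omega

lemma gammaOne_histLE_gammaSerra {n' : ℕ} (hn' : 1 ≤ n') :
    HistLE (gammaOne n') (gammaSerra 1 n') := fun J => by
  rw [gammaSerra_one hn', tailSum_add, tailSum_single, tailSum_single,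
    tailSum_eq_sum_Icc (gammaOne_support_subset n')]
  rcases lt_trichotomy J n' with hJ | rfl | hJ
  · calc ∑ j ∈ Finset.Icc J n', gammaOne n' j
        ≤ ∑ j ∈ Finset.range (n' + 1), gammaOne n' j :=
          Finset.sum_le_sum_of_subset fun j => by simp only [Finset.mem_Icc, Finset.mem_range]; omega
      _ ≤ n' + 1 := sum_range_gammaOne_le n'
      _ = _ := by simp [show J ≤ n' - 1 by omega, hJ.le]
  · simp [gammaOne_apply]
  · simp [Finset.Icc_eq_empty_of_lt hJ, hJ.not_ge]

lemma gammaOurs_zero (n' : ℕ) : gammaOurs 0 n' = Finsupp.single 0 1 := by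
  cases n' <;> rfl

lemma gammaOurs_one (n' : ℕ) : gammaOurs 1 n' = gammaOne n' := by
  cases n' <;> rfl

lemma gammaOurs_add_two_add_one {n m : ℕ} (h : n + 1 ≤ m) :
    gammaOurs (n + 2) (m + 1) = gammaOurs (n + 1) m + dm (gammaOurs (min (n + 2) m) m) := by
  obtain ⟨k, rfl⟩ : ∃ k, m = k + 1 := ⟨m - 1, by omega⟩
  simp only [gammaOurs, gammaOursAux, min_eq_left h]

/-- `γ^{ours}_{n,n'} ≼ γ^{serra}_{n,n'}` for every `n' ≥ 1` and `0 ≤ n ≤ n'`. -/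
theorem statement9 :
    ∀ n' : ℕ, 1 ≤ n' → ∀ n : ℕ, n ≤ n' → HistLE (gammaOurs n n') (gammaSerra n n') := by
  intro n' hn' n hn
  induction n' generalizing n with
  | zero => omega
  | succ m ih =>
    rcases n with _ | _ | n
    · rw [gammaOurs_zero, gammaSerra_zero]
      exact histLE_single_single (Nat.zero_le _) 1
    · rw [gammaOurs_one]
      exact gammaOne_histLE_gammaSerra hn'
    · have hm : 1 ≤ m := by omega
      rw [gammaOurs_add_two_add_one (by omega), gammaSerra_succ_succ]
      exact (ih hm (n + 1) (by omega)).add (ih hm _ (min_le_right _ _)).dm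
end
end

section
/- Let g_{n,n'} be a family of histograms, defined for n' ≥ 1 and 0 ≤ n ≤ n', satisfying the recursion g_{n,n'} = g_{n−1,n'−1} + dm(g_{min(n,n'−1),n'−1}) for all 2 ≤ n ≤ n', and whose initial values satisfy ‖g_{0,n'}‖₁ = 1 and ‖g_{1,n'}‖₁ = n'+1 for all n' ≥ 1, where ‖v‖₁ = Σ_j v(j). Then for every n' ≥ 1 and 0 ≤ n ≤ n', ‖g_{n,n'}‖₁ = Σ_{s=0}^{n} binomial(n', s). -/
open scoped Classical

noncomputable section

/-- `ℓ₁`-norm (sum of entries) of a histogram. -/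
def l1 (v : ℕ →₀ ℕ) : ℕ := ∑ j ∈ v.support, v j

/-!
Since `dm` only shifts a histogram, `‖·‖₁` turns the recursion into
`‖g_{n,n'}‖₁ = ‖g_{n-1,n'-1}‖₁ + ‖g_{min(n,n'-1),n'-1}‖₁`. Pascal's rule summed over `s ≤ n`
is exactly this recursion for the partial binomial sums, and the clipping `min` is harmless
because `binomial(n'-1, s)` vanishes for `s > n'-1`.
-/

lemma l1_eq_degree (v : ℕ →₀ ℕ) : l1 v = v.degree := rfl

lemma l1_add (v w : ℕ →₀ ℕ) : l1 (v + w) = l1 v + l1 w := by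
  simp only [l1_eq_degree, map_add]

lemma l1_dm (v : ℕ →₀ ℕ) : l1 (dm v) = l1 v := by
  rw [l1_eq_degree, l1_eq_degree, dm, Finsupp.embDomain_eq_mapDomain, Finsupp.degree_mapDomain]

namespace Nat

lemma sum_range_two_choose (m : ℕ) : ∑ s ∈ Finset.range 2, m.choose s = m + 1 := by
  simp [Finset.sum_range_succ, add_comm]

lemma sum_range_succ_choose_succ (m n : ℕ) :
    ∑ s ∈ Finset.range (n + 2), (m + 1).choose s =
      ∑ s ∈ Finset.range (n + 1), m.choose s + ∑ s ∈ Finset.range (n + 2), m.choose s := by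
  rw [Finset.sum_range_succ', Finset.sum_range_succ' (fun s => m.choose s) (n + 1)]
  simp only [choose_succ_succ', Finset.sum_add_distrib, choose_zero_right]
  ring

lemma sum_range_choose_min (m n : ℕ) :
    ∑ s ∈ Finset.range (min n m + 1), m.choose s = ∑ s ∈ Finset.range (n + 1), m.choose s := by
  rcases le_total n m with h | h
  · rw [min_eq_left h]
  · rw [min_eq_right h]
    refine Finset.sum_subset (Finset.range_subset_range.2 (by omega)) fun s hs hs' => ?_
    simp only [Finset.mem_range] at hs hs'
    exact choose_eq_zero_of_lt (by omega)

end Nat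

/-- Lemma 1: if a family of histograms satisfies the recursion
`g_{n,n'} = g_{n-1,n'-1} + dm(g_{min(n,n'-1),n'-1})` with `‖g_{0,n'}‖₁ = 1` and
`‖g_{1,n'}‖₁ = n'+1`, then `‖g_{n,n'}‖₁ = Σ_{s=0}^n binomial(n', s)`. -/
theorem statement11 (g : ℕ → ℕ → (ℕ →₀ ℕ))
    (hrec : ∀ n' n : ℕ, 2 ≤ n → n ≤ n' →
      g n n' = g (n - 1) (n' - 1) + dm (g (min n (n' - 1)) (n' - 1)))
    (h0 : ∀ n' : ℕ, 1 ≤ n' → l1 (g 0 n') = 1)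
    (h1 : ∀ n' : ℕ, 1 ≤ n' → l1 (g 1 n') = n' + 1) :
    ∀ n' : ℕ, 1 ≤ n' → ∀ n : ℕ, n ≤ n' →
      l1 (g n n') = ∑ s ∈ Finset.range (n + 1), Nat.choose n' s := by
  intro n' hn'
  induction n' with
  | zero => omega
  | succ m ih =>
    rintro (_ | _ | k) hn
    · simpa using h0 (m + 1) hn'
    · rw [h1 (m + 1) hn', Nat.sum_range_two_choose]
    · have hm : 1 ≤ m := by omega
      rw [hrec (m + 1) (k + 2) (by omega) hn, l1_add, l1_dm, Nat.add_sub_cancel,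
        show k + 2 - 1 = k + 1 from rfl, ih hm (k + 1) (by omega), ih hm _ (min_le_right _ _),
        Nat.sum_range_choose_min, Nat.sum_range_succ_choose_succ]
end
end

section
/- Let w, b ∈ ℝⁿ with all w_j ≠ 0 and with the breakpoints p_j = −b_j/w_j pairwise distinct, and for x ∈ ℝ define the activation pattern s(x) ∈ {0,1}ⁿ by s(x)_j = 1 iff w_j x + b_j > 0. If x and y lie in two adjacent open intervals of ℝ ∖ {p_1, …, p_n} (i.e., intervals sharing exactly one breakpoint p_i as a common endpoint), then s(x) and s(y) differ in exactly the coordinate i; in particular | |s(x)|₁ − |s(y)|₁ | = 1. -/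
open scoped Classical

noncomputable section

/-- if `x` and `y` lie in two adjacent open intervals of
`ℝ ∖ {p_1, …, p_n}` sharing exactly the breakpoint `p_i = -b_i/w_i` as a common endpoint,
then `s(x)` and `s(y)` differ exactly in coordinate `i`; in particular
`| |s(x)|₁ - |s(y)|₁ | = 1`. -/
theorem statement17 (n : ℕ) (w b : Fin n → ℝ) (hw : ∀ j, w j ≠ 0)
    (hdist : Function.Injective (fun j => -(b j) / w j))
    (x y : ℝ) (i : Fin n)
    (hxy : x < y)
    (hxi : x < -(b i) / w i) (hiy : -(b i) / w i < y)
    (hx : ∀ j, -(b j) / w j ≠ x) (hy : ∀ j, -(b j) / w j ≠ y)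
    (honly : ∀ j, x < -(b j) / w j → -(b j) / w j < y → j = i) :
    (∀ j, (decide (0 < w j * x + b j) ≠ decide (0 < w j * y + b j)) ↔ j = i) ∧
    (bweight (fun j => decide (0 < w j * x + b j)) + 1 =
        bweight (fun j => decide (0 < w j * y + b j)) ∨
      bweight (fun j => decide (0 < w j * y + b j)) + 1 =
        bweight (fun j => decide (0 < w j * x + b j))) := by
  have key : ∀ (j : Fin n) (t : ℝ), (0 < w j * t + b j) ↔
      ((0 < w j ∧ -(b j)/w j < t) ∨ (w j < 0 ∧ t < -(b j)/w j)) := by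
    intro j t
    have hwj := hw j
    have heq : w j * t + b j = w j * (t - (-(b j)/w j)) := by
      field_simp
      ring
    rw [heq, mul_pos_iff]
    constructor
    · rintro (⟨h1, h2⟩ | ⟨h1, h2⟩)
      · exact Or.inl ⟨h1, by linarith⟩
      · exact Or.inr ⟨h1, by linarith⟩
    · rintro (⟨h1, h2⟩ | ⟨h1, h2⟩)
      · exact Or.inl ⟨h1, by linarith⟩
      · exact Or.inr ⟨h1, by linarith⟩
  have hsame : ∀ j : Fin n, j ≠ i → ((0 < w j * x + b j) ↔ (0 < w j * y + b j)) := by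
    intro j hj
    have hp : -(b j)/w j < x ∨ y < -(b j)/w j := by
      rcases lt_trichotomy (-(b j)/w j) x with h | h | h
      · exact Or.inl h
      · exact absurd h (hx j)
      · rcases lt_trichotomy (-(b j)/w j) y with h' | h' | h'
        · exact absurd (honly j h h') hj
        · exact absurd h' (hy j)
        · exact Or.inr h'
    rw [key, key]
    rcases hp with h | h
    · constructor
      · rintro (⟨h1, h2⟩ | ⟨h1, h2⟩)
        · exact Or.inl ⟨h1, by linarith⟩
        · exact absurd h2 (by linarith)
      · rintro (⟨h1, h2⟩ | ⟨h1, h2⟩)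
        · exact Or.inl ⟨h1, by linarith⟩
        · exact absurd h2 (by linarith)
    · constructor
      · rintro (⟨h1, h2⟩ | ⟨h1, h2⟩)
        · exact absurd h2 (by linarith)
        · exact Or.inr ⟨h1, by linarith⟩
      · rintro (⟨h1, h2⟩ | ⟨h1, h2⟩)
        · exact absurd h2 (by linarith)
        · exact Or.inr ⟨h1, by linarith⟩
  have hdiff : ¬((0 < w i * x + b i) ↔ (0 < w i * y + b i)) := by
    rw [key, key]
    rcases lt_or_gt_of_ne (hw i) with hneg | hpos
    · intro h
      have h1 : (0 < w i ∧ -(b i)/w i < y) ∨ (w i < 0 ∧ y < -(b i)/w i) :=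
        h.mp (Or.inr ⟨hneg, hxi⟩)
      rcases h1 with ⟨h1, _⟩ | ⟨_, h2⟩
      · linarith
      · linarith
    · intro h
      have h1 : (0 < w i ∧ -(b i)/w i < x) ∨ (w i < 0 ∧ x < -(b i)/w i) :=
        h.mpr (Or.inl ⟨hpos, hiy⟩)
      rcases h1 with ⟨_, h2⟩ | ⟨h1, _⟩
      · linarith
      · linarith
  have hfirst : ∀ j, (decide (0 < w j * x + b j) ≠ decide (0 < w j * y + b j)) ↔ j = i := by
    intro j
    rw [Ne, decide_eq_decide]
    constructor
    · intro h
      by_contra hj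
      exact h (hsame j hj)
    · rintro rfl
      exact hdiff
  refine ⟨hfirst, ?_⟩
  set A := Finset.univ.filter (fun j => decide (0 < w j * x + b j) = true) with hA
  set B := Finset.univ.filter (fun j => decide (0 < w j * y + b j) = true) with hB
  by_cases hcase : 0 < w i * x + b i
  · -- i ∈ A, i ∉ B, so A = insert i B
    have hyi : ¬(0 < w i * y + b i) := fun h => hdiff ⟨fun _ => h, fun _ => hcase⟩
    right
    have hAB : A = insert i B := by
      ext j
      simp only [hA, hB, Finset.mem_insert, Finset.mem_filter, Finset.mem_univ, true_and,
        decide_eq_true_eq]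
      by_cases hj : j = i
      · subst hj; simp [hcase]
      · rw [hsame j hj]; tauto
    have hiB : i ∉ B := by
      simp [hB, hyi]
    show B.card + 1 = A.card
    rw [hAB, Finset.card_insert_of_notMem hiB]
  · have hyi : 0 < w i * y + b i := by
      by_contra h
      exact hdiff ⟨fun h' => absurd h' hcase, fun h' => absurd h' h⟩
    left
    have hBA : B = insert i A := by
      ext j
      simp only [hA, hB, Finset.mem_insert, Finset.mem_filter, Finset.mem_univ, true_and,
        decide_eq_true_eq]
      by_cases hj : j = i
      · subst hj; simp [hyi]
      · rw [hsame j hj]; tauto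
    have hiA : i ∉ A := by
      simp [hA, hcase]
    show A.card + 1 = B.card
    rw [hBA, Finset.card_insert_of_notMem hiA]
end
end
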